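/- Let g be a real Lie subalgebra of the skew-Hermitian 4×4 complex matrices containing iI₄, S_x, S_y and S_z. Suppose that for every F ∈ g and every v ∈ ℂ⁴, the function t ↦ τ̃(exp(tF)·v) is constant in t, where τ̃ is the three-tangle on the symmetric sector expressed in the orthonormal coordinates v = (v₀, v₁, v₂, v₃). Then g = span_ℝ{iI₄, S_x, S_y, S_z}. In other words, the Lie algebra of local symmetric transformations is maximal among Lie algebras whose flows leave the distributed tangle invariant on the symmetric sector. -/

import Mathlib

open Matrix Complex NormedSpace

noncomputable section

/-- S_x: the 4-dimensional irreducible representation of (i/2)σx. -/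
def Sx4 : Matrix (Fin 4) (Fin 4) ℂ :=
  (1/2 : ℂ) • !![0, (Real.sqrt 3 : ℂ) * I, 0, 0;
                 (Real.sqrt 3 : ℂ) * I, 0, 2 * I, 0;
                 0, 2 * I, 0, (Real.sqrt 3 : ℂ) * I;
                 0, 0, (Real.sqrt 3 : ℂ) * I, 0]

/-- S_y: the 4-dimensional irreducible representation of (i/2)σy. -/
def Sy4 : Matrix (Fin 4) (Fin 4) ℂ :=
  (1/2 : ℂ) • !![0, -(Real.sqrt 3 : ℂ), 0, 0;
                 (Real.sqrt 3 : ℂ), 0, -2, 0;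
                 0, 2, 0, -(Real.sqrt 3 : ℂ);
                 0, 0, (Real.sqrt 3 : ℂ), 0]

/-- S_z = (1/2)·diag(3i, i, −i, −3i). -/
def Sz4 : Matrix (Fin 4) (Fin 4) ℂ :=
  (1/2 : ℂ) • !![3 * I, 0, 0, 0; 0, I, 0, 0; 0, 0, -I, 0; 0, 0, 0, -3 * I]

/-- The three-tangle on the symmetric sector, in the orthonormal coordinates
v = (v₀,v₁,v₂,v₃) of the basis {φ₀, φ₁/√3, φ₂/√3, φ₃}: with c₀ = v₀, c₁ = v₁/√3,
c₂ = v₂/√3, c₃ = v₃ and X₂ = c₀c₂−c₁², X₃ = c₀c₃−c₁c₂, X₄ = c₁c₃−c₂²,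
τ̃(v) = 4|X₃² − 4X₂X₄|. -/
def tauTilde (v : Fin 4 → ℂ) : ℝ :=
  4 * ‖(
    ((v 0) * (v 3) - (v 1 / (Real.sqrt 3 : ℂ)) * (v 2 / (Real.sqrt 3 : ℂ))) ^ 2
    - 4 * ((v 0) * (v 2 / (Real.sqrt 3 : ℂ)) - (v 1 / (Real.sqrt 3 : ℂ)) ^ 2)
        * ((v 1 / (Real.sqrt 3 : ℂ)) * (v 3) - (v 2 / (Real.sqrt 3 : ℂ)) ^ 2))‖

/-!
With `c = (v₀, v₁/√3, v₂/√3, v₃)`, `τ̃ v = 4 |Δ c|` where `Δ` is the discriminant of the binary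
cubic `c₀x³ + 3c₁x²y + 3c₂xy² + c₃y³`, and a matrix `F` acts on `c` through its conjugate
`A = symConj F`. If every flow `exp (tF)` preserves `|Δ|`, differentiating `|Δ|²` at `t = 0` gives
`Re (conj (Δ c) · dΔ_c (A c)) = 0` for all `c`. Skew-Hermitian `F` become matrices `A` that are
skew-adjoint for the weights `binom(3, j)`, so the conjugate of `conj (Δ c) · dΔ_c (A c)` is again
complex-linear in the entries of `A`, and the condition at a dozen test points is a system of
linear equations on `A`. Its solutions are the tridiagonal matrices with the `sl₂` pattern
`3A₁₂ = 2A₀₁`, `3A₂₃ = A₀₁` and arithmetic diagonal, which are exactly the conjugates of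
`span_ℝ {iI, Sx, Sy, Sz}`.
-/

open ComplexConjugate

/-- Up to a constant, the discriminant of the binary cubic `c₀x³ + 3c₁x²y + 3c₂xy² + c₃y³`. -/
def cubicDisc (c : Fin 4 → ℂ) : ℂ :=
  (c 0 * c 3 - c 1 * c 2) ^ 2 - 4 * (c 0 * c 2 - c 1 ^ 2) * (c 1 * c 3 - c 2 ^ 2)

def cubicDiscDeriv (c w : Fin 4 → ℂ) : ℂ :=
  2 * (c 0 * c 3 - c 1 * c 2) * (w 0 * c 3 + c 0 * w 3 - w 1 * c 2 - c 1 * w 2)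
    - 4 * ((w 0 * c 2 + c 0 * w 2 - 2 * c 1 * w 1) * (c 1 * c 3 - c 2 ^ 2)
      + (c 0 * c 2 - c 1 ^ 2) * (w 1 * c 3 + c 1 * w 3 - 2 * c 2 * w 2))

lemma HasDerivAt.cubicDisc_comp {γ : ℝ → Fin 4 → ℂ} {γ' : Fin 4 → ℂ} {t : ℝ}
    (hγ : HasDerivAt γ γ' t) :
    HasDerivAt (fun s => cubicDisc (γ s)) (cubicDiscDeriv (γ t) γ') t := by
  have h : ∀ j, HasDerivAt (fun s => γ s j) (γ' j) t := hasDerivAt_pi.1 hγ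
  have hX₂ := ((h 0).fun_mul (h 2)).fun_sub ((h 1).fun_pow 2)
  have hX₃ := ((h 0).fun_mul (h 3)).fun_sub ((h 1).fun_mul (h 2))
  have hX₄ := ((h 1).fun_mul (h 3)).fun_sub ((h 2).fun_pow 2)
  unfold cubicDisc cubicDiscDeriv
  convert (hX₃.fun_pow 2).fun_sub ((hX₂.const_mul 4).fun_mul hX₄) using 1
  · ext s; ring
  · simp only [Nat.cast_ofNat, Nat.add_one_sub_one, pow_one]
    ring

lemma star_cubicDiscDeriv (c w : Fin 4 → ℂ) :
    star (cubicDiscDeriv c w) = cubicDiscDeriv (star c) (star w) := by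
  simp [cubicDiscDeriv]

lemma HasDerivAt.re_star_mul_eq_zero_of_norm_const {f : ℝ → ℂ} {f' : ℂ} {t : ℝ}
    (hf : HasDerivAt f f' t) (hconst : ∀ s, ‖f s‖ = ‖f t‖) : (star (f t) * f').re = 0 := by
  have h := hf.norm_sq
  simp only [hconst] at h
  have := h.unique (hasDerivAt_const t _)
  rw [Complex.inner] at this
  simpa [mul_comm] using this

lemma hasDerivAt_exp_smul_mulVec {n : Type*} [Fintype n] [DecidableEq n] (F : Matrix n n ℂ)
    (v : n → ℂ) : HasDerivAt (fun t : ℝ => NormedSpace.exp (t • F) *ᵥ v) (F *ᵥ v) 0 := by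
  let _ : NormedRing (Matrix n n ℂ) := Matrix.linftyOpNormedRing
  let _ : NormedAlgebra ℝ (Matrix n n ℂ) := Matrix.linftyOpNormedAlgebra
  have hexp := hasDerivAt_exp_smul_const (𝕂 := ℝ) F 0
  rw [zero_smul, NormedSpace.exp_zero, one_mul] at hexp
  rw [hasDerivAt_pi]
  intro j
  convert HasDerivAt.fun_sum (u := Finset.univ) fun k _ =>
    (hasDerivAt_pi.1 (hasDerivAt_pi.1 hexp j) k).mul_const (v k) using 1 <;> rfl

def symCoords (v : Fin 4 → ℂ) : Fin 4 → ℂ :=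
  ![v 0, v 1 / (Real.sqrt 3 : ℂ), v 2 / (Real.sqrt 3 : ℂ), v 3]

lemma tauTilde_eq_norm_cubicDisc (v : Fin 4 → ℂ) :
    tauTilde v = 4 * ‖cubicDisc (symCoords v)‖ := rfl

lemma HasDerivAt.symCoords_comp {γ : ℝ → Fin 4 → ℂ} {γ' : Fin 4 → ℂ} {t : ℝ}
    (hγ : HasDerivAt γ γ' t) :
    HasDerivAt (fun s => symCoords (γ s)) (symCoords γ') t := by
  rw [hasDerivAt_pi] at *
  intro j
  fin_cases j
  exacts [hγ 0, (hγ 1).div_const _, (hγ 2).div_const _, hγ 3]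

def symWeight : Fin 4 → ℂ := ![1, (Real.sqrt 3 : ℂ), (Real.sqrt 3 : ℂ), 1]

lemma symWeight_ne_zero (j : Fin 4) : symWeight j ≠ 0 := by
  fin_cases j <;> simp [symWeight]

lemma star_symWeight (j : Fin 4) : star (symWeight j) = symWeight j := by
  fin_cases j <;> simp [symWeight]

lemma symWeight_sq (j : Fin 4) : symWeight j ^ 2 = (Nat.choose 3 j : ℂ) := by
  fin_cases j <;> simp [symWeight, Nat.choose, ← Complex.ofReal_pow]

lemma symCoords_eq_div (v : Fin 4 → ℂ) : symCoords v = fun j => v j / symWeight j := by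
  ext j
  fin_cases j <;> simp [symCoords, symWeight]

lemma symCoords_surjective : Function.Surjective symCoords := fun c =>
  ⟨fun j => c j * symWeight j, by
    rw [symCoords_eq_div]
    ext j
    exact mul_div_cancel_right₀ _ (symWeight_ne_zero j)⟩

def symConj (F : Matrix (Fin 4) (Fin 4) ℂ) : Matrix (Fin 4) (Fin 4) ℂ :=
  Matrix.of fun j k => F j k * symWeight k / symWeight j

lemma symCoords_mulVec (F : Matrix (Fin 4) (Fin 4) ℂ) (v : Fin 4 → ℂ) :
    symCoords (F *ᵥ v) = symConj F *ᵥ symCoords v := by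
  rw [symCoords_eq_div, symCoords_eq_div]
  ext j
  simp only [mulVec, dotProduct, symConj, Matrix.of_apply, Finset.sum_div]
  refine Finset.sum_congr rfl fun k _ => ?_
  field_simp [symWeight_ne_zero]

lemma conj_symConj_apply {F : Matrix (Fin 4) (Fin 4) ℂ} (hF : Fᴴ = -F) (j k : Fin 4) :
    conj (symConj F j k) = -((Nat.choose 3 k : ℂ) / Nat.choose 3 j) * symConj F k j := by
  have hkj : conj (F j k) = -F k j := by
    simpa using congrFun (congrFun hF k) j
  have := symWeight_ne_zero j
  have := symWeight_ne_zero k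
  simp only [symConj, Matrix.of_apply, map_div₀, map_mul, hkj, ← symWeight_sq]
  rw [← Complex.star_def, star_symWeight, star_symWeight]
  field_simp

/-- The linear vector field `c ↦ A c` is tangent to the level sets of `‖cubicDisc‖`. -/
def InfinitesimallyPreservesNormCubicDisc (A : Matrix (Fin 4) (Fin 4) ℂ) : Prop :=
  ∀ c, (star (cubicDisc c) * cubicDiscDeriv c (A *ᵥ c)).re = 0

lemma infinitesimallyPreservesNormCubicDisc_symConj {F : Matrix (Fin 4) (Fin 4) ℂ}
    (hinv : ∀ v : Fin 4 → ℂ, ∀ t : ℝ, tauTilde (NormedSpace.exp (t • F) *ᵥ v) = tauTilde v) :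
    InfinitesimallyPreservesNormCubicDisc (symConj F) := by
  intro c
  obtain ⟨v, rfl⟩ := symCoords_surjective c
  rw [← symCoords_mulVec]
  have hγ := (hasDerivAt_exp_smul_mulVec F v).symCoords_comp.cubicDisc_comp
  have h0 : NormedSpace.exp ((0 : ℝ) • F) *ᵥ v = v := by simp
  rw [h0] at hγ
  have hconst : ∀ t : ℝ, ‖cubicDisc (symCoords (NormedSpace.exp (t • F) *ᵥ v))‖ =
      ‖cubicDisc (symCoords (NormedSpace.exp ((0 : ℝ) • F) *ᵥ v))‖ := fun t => by
    have := hinv v t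
    rw [tauTilde_eq_norm_cubicDisc, tauTilde_eq_norm_cubicDisc] at this
    rw [h0]
    linarith
  simpa only [h0] using hγ.re_star_mul_eq_zero_of_norm_const hconst

namespace InfinitesimallyPreservesNormCubicDisc

variable {A : Matrix (Fin 4) (Fin 4) ℂ}

attribute [local simp] cubicDisc cubicDiscDeriv mulVec dotProduct Fin.sum_univ_four map_ofNat

lemma star_mul_add_eq_zero (hinv : InfinitesimallyPreservesNormCubicDisc A) (c : Fin 4 → ℂ) :
    star (cubicDisc c) * cubicDiscDeriv c (A *ᵥ c)
      + cubicDisc c * cubicDiscDeriv (star c) (A.map star *ᵥ star c) = 0 := by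
  have hz : ∀ z : ℂ, z.re = 0 → z + star z = 0 := fun z hz =>
    Complex.ext (by simp [hz]) (by simp)
  have hAc : star (A *ᵥ c) = A.map star *ᵥ star c :=
    funext fun j => RingHom.map_mulVec (starRingEnd ℂ) A c j
  simpa only [star_mul', star_star, star_cubicDiscDeriv, hAc] using hz _ (hinv c)

lemma corner_eq_zero (hinv : InfinitesimallyPreservesNormCubicDisc A)
    (hA : ∀ j k, conj (A j k) = -((Nat.choose 3 k : ℂ) / Nat.choose 3 j) * A k j) :
    A 0 2 = 0 ∧ A 2 0 = 0 ∧ A 0 3 = 0 ∧ A 3 0 = 0 ∧ A 1 3 = 0 ∧ A 3 1 = 0 := by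
  have key := hinv.star_mul_add_eq_zero
  have e1 : A 0 3 = A 3 0 := by
    have e := key ![1, 0, 0, 2]
    simp [hA, Nat.choose] at e
    grind
  have e2 : A 0 3 = -A 3 0 := by
    have e := key ![1, 0, 0, 2 * I]
    simp [hA, Nat.choose] at e
    grind [Complex.I_sq]
  have e3 : A 0 2 = 3 * A 2 0 := by
    have e := key ![1, 0, 2, 0]
    simp [hA, Nat.choose] at e
    grind
  have e4 : A 0 2 = -3 * A 2 0 := by
    have e := key ![1, 0, 2 * I, 0]
    simp [hA, Nat.choose] at e
    grind [Complex.I_sq]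
  have e5 : 3 * A 1 3 = A 3 1 := by
    have e := key ![0, 1, 0, 2]
    simp [hA, Nat.choose] at e
    grind
  have e6 : 3 * A 1 3 = -A 3 1 := by
    have e := key ![0, 1, 0, 2 * I]
    simp [hA, Nat.choose] at e
    grind [Complex.I_sq]
  refine ⟨?_, ?_, ?_, ?_, ?_, ?_⟩
  · linear_combination (e3 + e4) / 2
  · linear_combination (e4 - e3) / 6
  · linear_combination (e1 + e2) / 2
  · linear_combination (e2 - e1) / 2
  · linear_combination (e5 + e6) / 6
  · linear_combination (e6 - e5) / 2

lemma tridiag_rel (hinv : InfinitesimallyPreservesNormCubicDisc A)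
    (hA : ∀ j k, conj (A j k) = -((Nat.choose 3 k : ℂ) / Nat.choose 3 j) * A k j) :
    3 * A 1 2 = 2 * A 0 1 ∧ 3 * A 2 3 = A 0 1 ∧ A 2 1 = 2 * A 1 0 ∧ A 3 2 = 3 * A 1 0 := by
  obtain ⟨h02, h20, h03, h30, h13, h31⟩ := hinv.corner_eq_zero hA
  have key := hinv.star_mul_add_eq_zero
  have e1 : -A 0 1 + 3 * A 1 0 + 3 * A 1 2 - 3 * A 2 1 - 3 * A 2 3 + A 3 2 = 0 := by
    have e := key ![1, 1, 0, 1]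
    simp [hA, Nat.choose] at e
    grind
  have e2 : 3 * A 0 1 - 9 * A 1 0 - 3 * A 1 2 + 3 * A 2 1 - 3 * A 2 3 + A 3 2 = 0 := by
    have e := key ![1, -1, 0, 1]
    simp [hA, Nat.choose] at e
    grind
  have e3 : A 0 1 + 3 * A 1 0 - 3 * A 1 2 - 3 * A 2 1 + 3 * A 2 3 + A 3 2 = 0 := by
    have e := key ![1, I, 0, -I]
    simp [hA, Nat.choose] at e
    grind [Complex.I_sq]
  have e4 : 3 * A 0 1 + 9 * A 1 0 - 3 * A 1 2 - 3 * A 2 1 - 3 * A 2 3 - A 3 2 = 0 := by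
    have e := key ![1, -I, 0, -I]
    simp [hA, Nat.choose] at e
    grind [Complex.I_sq]
  refine ⟨?_, ?_, ?_, ?_⟩
  · linear_combination (e1 - e2 - e3 - e4) / 4
  · linear_combination (-e1 - e2 + e3 - e4) / 4
  · linear_combination (-e1 + e2 - e3 - e4) / 12
  · linear_combination (e1 + e2 + e3 - e4) / 4

lemma diag_rel (hinv : InfinitesimallyPreservesNormCubicDisc A)
    (hA : ∀ j k, conj (A j k) = -((Nat.choose 3 k : ℂ) / Nat.choose 3 j) * A k j) :
    A 0 0 + A 2 2 = 2 * A 1 1 ∧ A 1 1 + A 3 3 = 2 * A 2 2 := by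
  obtain ⟨h02, h20, h03, h30, h13, h31⟩ := hinv.corner_eq_zero hA
  obtain ⟨h12, h23, h21, h32⟩ := hinv.tridiag_rel hA
  have key := hinv.star_mul_add_eq_zero
  have e1 : 2 * A 0 0 - 3 * A 1 1 + A 3 3 = 0 := by
    have e := key ![1, -I, 0, 1]
    simp [hA, Nat.choose] at e
    grind [Complex.I_sq]
  have e2 : A 0 0 - 3 * A 2 2 + 2 * A 3 3 = 0 := by
    have e := key ![1, 0, -I, 1]
    simp [hA, Nat.choose] at e
    grind [Complex.I_sq]
  exact ⟨by linear_combination (2 * e1 - e2) / 3, by linear_combination (2 * e2 - e1) / 3⟩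

end InfinitesimallyPreservesNormCubicDisc

lemma mem_span_of_entry_relations {F : Matrix (Fin 4) (Fin 4) ℂ} (hF : Fᴴ = -F)
    (h02 : F 0 2 = 0) (h03 : F 0 3 = 0) (h13 : F 1 3 = 0)
    (h12 : (Real.sqrt 3 : ℂ) * F 1 2 = 2 * F 0 1) (h23 : F 2 3 = F 0 1)
    (hd₁ : F 0 0 + F 2 2 = 2 * F 1 1) (hd₂ : F 1 1 + F 3 3 = 2 * F 2 2) :
    F ∈ Submodule.span ℝ
      ({Complex.I • (1 : Matrix (Fin 4) (Fin 4) ℂ), Sx4, Sy4, Sz4} :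
        Set (Matrix (Fin 4) (Fin 4) ℂ)) := by
  have hre : ∀ j k, (F k j).re = -(F j k).re := fun j k => by
    simpa using congrArg Complex.re (congrFun (congrFun hF j) k)
  have him : ∀ j k, (F k j).im = (F j k).im := fun j k => by
    simpa using congrArg Complex.im (congrFun (congrFun hF j) k)
  have hdiag : ∀ j, (F j j).re = 0 := fun j => by linarith [hre j j]
  have h12re : Real.sqrt 3 * (F 1 2).re = 2 * (F 0 1).re := by
    simpa using congrArg Complex.re h12
  have h12im : Real.sqrt 3 * (F 1 2).im = 2 * (F 0 1).im := by
    simpa using congrArg Complex.im h12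
  have hd₁im : (F 0 0).im + (F 2 2).im = 2 * (F 1 1).im := by
    simpa using congrArg Complex.im hd₁
  have hd₂im : (F 1 1).im + (F 3 3).im = 2 * (F 2 2).im := by
    simpa using congrArg Complex.im hd₂
  have hF : F = (((F 1 1).im + (F 2 2).im) / 2) • (Complex.I • (1 : Matrix (Fin 4) (Fin 4) ℂ))
      + (2 * (F 0 1).im / Real.sqrt 3) • Sx4 + (-2 * (F 0 1).re / Real.sqrt 3) • Sy4
      + ((F 0 0).im - (F 1 1).im) • Sz4 := by
    ext j k
    fin_cases j <;> fin_cases k <;> apply Complex.ext <;>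
      simp [Sx4, Sy4, Sz4, hre 0 1, hre 0 2, hre 0 3, hre 1 2, hre 1 3, hre 2 3,
        him 0 1, him 0 2, him 0 3, him 1 2, him 1 3, him 2 3, hdiag, h02, h03, h13, h23] <;>
      field_simp <;> linarith
  rw [hF]
  refine Submodule.add_mem _ (Submodule.add_mem _ (Submodule.add_mem _ ?_ ?_) ?_) ?_ <;>
    exact Submodule.smul_mem _ _ (Submodule.subset_span (by simp))

lemma mem_span_of_infinitesimallyPreservesNormCubicDisc_symConj {F : Matrix (Fin 4) (Fin 4) ℂ}
    (hF : Fᴴ = -F) (hinv : InfinitesimallyPreservesNormCubicDisc (symConj F)) :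
    F ∈ Submodule.span ℝ
      ({Complex.I • (1 : Matrix (Fin 4) (Fin 4) ℂ), Sx4, Sy4, Sz4} :
        Set (Matrix (Fin 4) (Fin 4) ℂ)) := by
  have hA := conj_symConj_apply hF
  obtain ⟨h02, -, h03, -, h13, -⟩ := hinv.corner_eq_zero hA
  obtain ⟨h12, h23, -, -⟩ := hinv.tridiag_rel hA
  obtain ⟨hd₁, hd₂⟩ := hinv.diag_rel hA
  have hs : (Real.sqrt 3 : ℂ) ≠ 0 := by simp
  have hs2 : (Real.sqrt 3 : ℂ) * Real.sqrt 3 = 3 := by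
    rw [← Complex.ofReal_mul, Real.mul_self_sqrt (by norm_num)]
    norm_num
  simp only [symConj, symWeight, of_apply, cons_val, cons_val_zero, cons_val_one, div_one,
    mul_one, mul_eq_zero, hs, or_false, div_eq_zero_iff, isUnit_iff_ne_zero, ne_eq,
    not_false_eq_true, IsUnit.mul_div_cancel_right] at h02 h03 h13 h12 h23 hd₁ hd₂
  field_simp at h23
  refine mem_span_of_entry_relations hF h02 h03 h13 ?_ ?_ hd₁ hd₂
  · linear_combination (Real.sqrt 3 : ℂ) / 3 * h12 + 2 / 3 * F 0 1 * hs2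
  · linear_combination h23 / 3 + F 0 1 / 3 * hs2

theorem statement16_general (g : Submodule ℝ (Matrix (Fin 4) (Fin 4) ℂ))
    (hskew : ∀ M ∈ g, Mᴴ = -M)
    (hI : Complex.I • (1 : Matrix (Fin 4) (Fin 4) ℂ) ∈ g)
    (hx : Sx4 ∈ g) (hy : Sy4 ∈ g) (hz : Sz4 ∈ g)
    (hinv : ∀ F ∈ g, ∀ v : Fin 4 → ℂ, ∀ t : ℝ,
      tauTilde ((NormedSpace.exp (t • F)).mulVec v) = tauTilde v) :
    g = Submodule.span ℝ
      ({Complex.I • (1 : Matrix (Fin 4) (Fin 4) ℂ), Sx4, Sy4, Sz4} :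
        Set (Matrix (Fin 4) (Fin 4) ℂ)) := by
  refine le_antisymm (fun F hF => ?_) ?_
  · exact mem_span_of_infinitesimallyPreservesNormCubicDisc_symConj (hskew F hF)
      (infinitesimallyPreservesNormCubicDisc_symConj (hinv F hF))
  · rw [Submodule.span_le]
    rintro M (rfl | rfl | rfl | rfl)
    exacts [hI, hx, hy, hz]

/-- if g is a real Lie algebra of skew-Hermitian 4×4 matrices
containing iI₄, S_x, S_y, S_z, and every flow exp(tF), F ∈ g, leaves the distributed
tangle τ̃ invariant, then g = span_ℝ{iI₄, S_x, S_y, S_z}: the local symmetric Lie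
algebra is maximal among Lie algebras leaving the three-tangle invariant. -/
theorem statement16 (g : Submodule ℝ (Matrix (Fin 4) (Fin 4) ℂ))
    (hskew : ∀ M ∈ g, Mᴴ = -M)
    (hlie : ∀ A ∈ g, ∀ B ∈ g, A * B - B * A ∈ g)
    (hI : Complex.I • (1 : Matrix (Fin 4) (Fin 4) ℂ) ∈ g)
    (hx : Sx4 ∈ g) (hy : Sy4 ∈ g) (hz : Sz4 ∈ g)
    (hinv : ∀ F ∈ g, ∀ v : Fin 4 → ℂ, ∀ t : ℝ,
      tauTilde ((NormedSpace.exp (t • F)).mulVec v) = tauTilde v) :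
    g = Submodule.span ℝ
      ({Complex.I • (1 : Matrix (Fin 4) (Fin 4) ℂ), Sx4, Sy4, Sz4} :
        Set (Matrix (Fin 4) (Fin 4) ℂ)) :=
  statement16_general g hskew hI hx hy hz hinv
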